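/- arXiv:2401.08388 — 2 statements merged into one kernel-verified Lean document; each statement's English description precedes it below -/
import Mathlib

section
/- The number of finite sequences (a_1,...,a_{2m}) of nonzero integers (over all m ≥ 1) satisfying 2·Σ|a_i| − ℓ = c and Σ|a_i| − ℓ + 1 = b, where ℓ is the number of sign changes in the sequence, is: 2 if c ≥ 3 is odd and b = 2; 2^{b−2}·C(c−b, b−2) if c ≥ 3 and 3 ≤ b ≤ ⌈(c+1)/2⌉; and 0 otherwise. -/
open Classical

/-- The number of sign changes in a finite sequence of integers. -/
def signChanges (l : List ℤ) : ℕ :=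
  ((l.zip l.tail).filter (fun p => p.1 * p.2 < 0)).length

/-- The sum of the absolute values of the entries. -/
def absSum (l : List ℤ) : ℕ := (l.map Int.natAbs).sum

/-- An even continued fraction representation: a nonempty even-length
sequence of nonzero integers. -/
def IsECF (l : List ℤ) : Prop :=
  l ≠ [] ∧ Even l.length ∧ ∀ x ∈ l, x ≠ 0

/-- Palindromic or anti-palindromic sequences. -/
def IsPalOrAnti (l : List ℤ) : Prop :=
  l.reverse = l ∨ l.reverse = l.map (fun x => -x)

/-- The set `E(c)` of even continued fractions with crossing number `c`. -/
def Ecross (c : ℕ) : Set (List ℤ) :=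
  {l | IsECF l ∧ (2 * absSum l : ℤ) - signChanges l = c}

/-- The set `E(c,b)` of even continued fractions with crossing number `c`
and braid index `b`. -/
def Eset (c b : ℕ) : Set (List ℤ) :=
  {l | IsECF l ∧ (2 * absSum l : ℤ) - signChanges l = c ∧
    (absSum l : ℤ) - signChanges l + 1 = b}

noncomputable def e (c b : ℕ) : ℕ := (Eset c b).ncard

noncomputable def eTot (c : ℕ) : ℕ := (Ecross c).ncard

noncomputable def ep (c b : ℕ) : ℕ := (Eset c b ∩ {l | IsPalOrAnti l}).ncard

noncomputable def epTot (c : ℕ) : ℕ := (Ecross c ∩ {l | IsPalOrAnti l}).ncard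

/-!
With `S = Σ |aᵢ|`, the conditions read `S = c + 1 - b` and `ℓ = c + 2 - 2b`, so we count
sequences of nonzero integers by absolute sum, number of sign changes and parity of the length.
A sequence with absolute sum `S + 2` arises in exactly one way from one with absolute sum `S + 1`:
by moving its first entry one step away from zero (same length and sign changes), or by
prepending `±1` with the sign of its first entry (one entry more) or the opposite sign (one
entry and one sign change more). The resulting Pascal-type recursion is solved by
`2 ^ (S - ℓ) * C(S, ℓ)` sequences of absolute sum `S + 1` for `ℓ < S`, whatever the parity,
while for `ℓ = S` all `S + 1` entries are `±1` with alternating signs: two sequences, both of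
length `ℓ + 1`.
-/

lemma signChanges_cons_cons (a b : ℤ) (t : List ℤ) :
    signChanges (a :: b :: t) = (if a * b < 0 then 1 else 0) + signChanges (b :: t) := by
  by_cases h : a * b < 0 <;> simp [signChanges, h, Nat.add_comm]

lemma signChanges_cons_of_sign_eq {a a' : ℤ} (h : a.sign = a'.sign) (t : List ℤ) :
    signChanges (a :: t) = signChanges (a' :: t) := by
  cases t with
  | nil => rfl
  | cons b t =>
    have neg_iff (x : ℤ) : x * b < 0 ↔ x.sign * b.sign = -1 := by
      rw [← Int.sign_mul, Int.sign_eq_neg_one_iff_neg]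
    simp only [signChanges_cons_cons, neg_iff, h]

lemma absSum_cons (a : ℤ) (t : List ℤ) : absSum (a :: t) = a.natAbs + absSum t := by
  simp [absSum]

lemma length_le_absSum {l : List ℤ} (h : ∀ x ∈ l, x ≠ 0) : l.length ≤ absSum l := by
  induction l with
  | nil => simp [absSum]
  | cons a t ih =>
    simp only [List.mem_cons, forall_eq_or_imp] at h
    have := ih h.2
    rw [List.length_cons, absSum_cons]
    omega

lemma signChanges_lt_absSum {l : List ℤ} (hne : l ≠ []) (h : ∀ x ∈ l, x ≠ 0) :
    signChanges l < absSum l := by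
  have hzip : signChanges l ≤ (l.zip l.tail).length := List.length_filter_le _ _
  rw [List.length_zip, List.length_tail] at hzip
  have := List.length_pos_iff.2 hne
  have := length_le_absSum h
  omega

lemma Int.sign_add_sign {a : ℤ} (ha : a ≠ 0) : (a + a.sign).sign = a.sign := by
  rcases ha.lt_or_gt with h | h
  · rw [Int.sign_eq_neg_one_of_neg h, Int.sign_eq_neg_one_of_neg (by omega)]
  · rw [Int.sign_eq_one_of_pos h, Int.sign_eq_one_of_pos (by omega)]

lemma Int.natAbs_add_sign {a : ℤ} (ha : a ≠ 0) : (a + a.sign).natAbs = a.natAbs + 1 := by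
  rcases ha.lt_or_gt with h | h
  · rw [Int.sign_eq_neg_one_of_neg h]; omega
  · rw [Int.sign_eq_one_of_pos h]; omega

lemma Int.exists_add_sign_eq {a : ℤ} (ha : 2 ≤ a.natAbs) :
    ∃ a', a' ≠ 0 ∧ a' + a'.sign = a := by
  rcases le_or_gt a 0 with h | h
  · exact ⟨a + 1, by omega, by rw [Int.sign_eq_neg_one_of_neg (by omega)]; ring⟩
  · exact ⟨a - 1, by omega, by rw [Int.sign_eq_one_of_pos (by omega)]; ring⟩

lemma Nat.bodd_eq_false_iff_even (n : ℕ) : n.bodd = false ↔ Even n := by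
  rw [Nat.even_iff, Nat.mod_two_of_bodd]
  cases n.bodd <;> simp

def nonzeroSeqs (S L : ℕ) (p : Bool) : Set (List ℤ) :=
  {l | l ≠ [] ∧ (∀ x ∈ l, x ≠ 0) ∧ absSum l = S ∧ signChanges l = L ∧
    l.length.bodd = p}

def growHead : List ℤ → List ℤ
  | [] => []
  | a :: t => (a + a.sign) :: t

lemma growHead_mem_nonzeroSeqs_iff {a : ℤ} (ha : a ≠ 0) (t : List ℤ) (S L : ℕ) (p : Bool) :
    growHead (a :: t) ∈ nonzeroSeqs (S + 1) L p ↔ a :: t ∈ nonzeroSeqs S L p := by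
  have hne : a + a.sign ≠ 0 := by
    intro h; have := Int.natAbs_add_sign ha; omega
  simp only [growHead, nonzeroSeqs, Set.mem_ofPred_eq, List.mem_cons, forall_eq_or_imp,
    absSum_cons, Int.natAbs_add_sign ha, signChanges_cons_of_sign_eq (Int.sign_add_sign ha),
    List.length_cons, ne_eq, reduceCtorEq, not_false_eq_true, true_and, hne, ha]
  constructor <;> rintro ⟨h1, h2, h3, h4⟩ <;> exact ⟨h1, by omega, h3, h4⟩

lemma sign_cons_mem_nonzeroSeqs_iff {b : ℤ} (hb : b ≠ 0) (t : List ℤ) (S L : ℕ) (p : Bool) :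
    b.sign :: b :: t ∈ nonzeroSeqs (S + 1) L p ↔ b :: t ∈ nonzeroSeqs S L (!p) := by
  have : ¬ b.sign * b < 0 := by rw [Int.sign_mul_self_eq_natAbs]; omega
  simp only [nonzeroSeqs, Set.mem_ofPred_eq, List.mem_cons, forall_eq_or_imp, absSum_cons,
    signChanges_cons_cons, this, Int.natAbs_sign_of_ne_zero hb, List.length_cons, Nat.bodd_succ,
    ne_eq, reduceCtorEq, not_false_eq_true, true_and, hb, if_false, zero_add, Bool.not_not,
    Bool.not_inj_iff, Int.sign_eq_zero_iff_zero]
  constructor <;> rintro ⟨h1, h2, h3, h4⟩ <;> exact ⟨h1, by omega, h3, h4⟩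

lemma neg_sign_cons_mem_nonzeroSeqs_iff {b : ℤ} (hb : b ≠ 0) (t : List ℤ) (S L : ℕ)
    (p : Bool) :
    -b.sign :: b :: t ∈ nonzeroSeqs (S + 1) L p ↔
      b :: t ∈ nonzeroSeqs S (L - 1) (!p) ∧ 0 < L := by
  have : -b.sign * b < 0 := by rw [neg_mul, Int.sign_mul_self_eq_natAbs]; omega
  simp only [nonzeroSeqs, Set.mem_ofPred_eq, List.mem_cons, forall_eq_or_imp, absSum_cons,
    signChanges_cons_cons, this, Int.natAbs_neg, Int.natAbs_sign_of_ne_zero hb, List.length_cons,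
    Nat.bodd_succ, ne_eq, reduceCtorEq, not_false_eq_true, true_and, hb, if_true, Bool.not_not,
    Bool.not_inj_iff, neg_eq_zero, Int.sign_eq_zero_iff_zero]
  constructor
  · rintro ⟨h1, h2, h3, h4⟩; exact ⟨⟨h1, by omega, by omega, h4⟩, by omega⟩
  · rintro ⟨⟨h1, h2, h3, h4⟩, hL⟩; exact ⟨h1, by omega, by omega, h4⟩

lemma nonzeroSeqs_add_two (S L : ℕ) (p : Bool) :
    nonzeroSeqs (S + 2) L p =
      growHead '' nonzeroSeqs (S + 1) L p ∪
        (fun l => l.headI.sign :: l) '' nonzeroSeqs (S + 1) L (!p) ∪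
        (fun l => -l.headI.sign :: l) '' {l ∈ nonzeroSeqs (S + 1) (L - 1) (!p) | 0 < L} := by
  ext l
  constructor
  · intro hl
    obtain ⟨a, t, rfl⟩ := List.exists_cons_of_ne_nil hl.1
    have ha : a ≠ 0 := hl.2.1 a List.mem_cons_self
    by_cases hbig : 2 ≤ a.natAbs
    · obtain ⟨a', ha', rfl⟩ := Int.exists_add_sign_eq hbig
      exact Or.inl (Or.inl ⟨a' :: t, (growHead_mem_nonzeroSeqs_iff ha' t _ _ _).1 hl, rfl⟩)
    · have habs : absSum (a :: t) = S + 2 := hl.2.2.1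
      rw [absSum_cons] at habs
      have ht : t ≠ [] := by rintro rfl; simp [absSum] at habs; omega
      obtain ⟨b, t, rfl⟩ := List.exists_cons_of_ne_nil ht
      have hb : b ≠ 0 := hl.2.1 b (by simp)
      have : a.natAbs = b.sign.natAbs := by rw [Int.natAbs_sign_of_ne_zero hb]; omega
      rcases Int.natAbs_eq_natAbs_iff.1 this with rfl | rfl
      · exact Or.inl (Or.inr ⟨b :: t, (sign_cons_mem_nonzeroSeqs_iff hb t _ _ _).1 hl, rfl⟩)
      · exact Or.inr ⟨b :: t, (neg_sign_cons_mem_nonzeroSeqs_iff hb t _ _ _).1 hl, rfl⟩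
  · rintro ((⟨m, hm, rfl⟩ | ⟨m, hm, rfl⟩) | ⟨m, ⟨hm, hL⟩, rfl⟩) <;>
      obtain ⟨a, t, rfl⟩ := List.exists_cons_of_ne_nil hm.1 <;>
      have ha : a ≠ 0 := hm.2.1 a List.mem_cons_self
    · exact (growHead_mem_nonzeroSeqs_iff ha t _ _ _).2 hm
    · exact (sign_cons_mem_nonzeroSeqs_iff ha t _ _ _).2 hm
    · exact (neg_sign_cons_mem_nonzeroSeqs_iff ha t _ _ _).2 ⟨hm, hL⟩

lemma encard_nonzeroSeqs_add_two (S L : ℕ) (p : Bool) :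
    (nonzeroSeqs (S + 2) L p).encard =
      (nonzeroSeqs (S + 1) L p).encard + (nonzeroSeqs (S + 1) L (!p)).encard +
        if 0 < L then (nonzeroSeqs (S + 1) (L - 1) (!p)).encard else 0 := by
  have grow_inj : Set.InjOn growHead (nonzeroSeqs (S + 1) L p) := by
    rintro m ⟨hm, hm0, -⟩ m' ⟨hm', hm0', -⟩ h
    obtain ⟨a, t, rfl⟩ := List.exists_cons_of_ne_nil hm
    obtain ⟨a', t', rfl⟩ := List.exists_cons_of_ne_nil hm'
    simp only [growHead, List.cons.injEq] at h
    have hsign := congrArg Int.sign h.1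
    rw [Int.sign_add_sign (hm0 a List.mem_cons_self),
      Int.sign_add_sign (hm0' a' List.mem_cons_self)] at hsign
    rw [h.2]
    congr 1
    omega
  have cons_inj (f : List ℤ → ℤ) (s : Set (List ℤ)) : Set.InjOn (fun l => f l :: l) s :=
    fun _ _ _ _ h => (List.cons.inj h).2
  have grow_ne_sign_cons {m : List ℤ} (hm : m ∈ nonzeroSeqs (S + 1) L p) (x : ℤ)
      (l : List ℤ) :
      growHead m ≠ x.sign :: l ∧ growHead m ≠ -x.sign :: l := by
    obtain ⟨a, t, rfl⟩ := List.exists_cons_of_ne_nil hm.1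
    have ha := hm.2.1 a List.mem_cons_self
    have habs := Int.natAbs_add_sign ha
    have hx : x.sign.natAbs ≤ 1 := by rcases x.sign_trichotomy with h | h | h <;> simp [h]
    constructor <;> intro h <;> simp only [growHead, List.cons.injEq] at h <;> omega
  have disj_grow_same : Disjoint (growHead '' nonzeroSeqs (S + 1) L p)
      ((fun l => l.headI.sign :: l) '' nonzeroSeqs (S + 1) L (!p)) := by
    rw [Set.disjoint_left]
    rintro _ ⟨m, hm, rfl⟩ ⟨m', -, h⟩
    exact (grow_ne_sign_cons hm _ _).1 h.symm
  have disj_flip : Disjoint (growHead '' nonzeroSeqs (S + 1) L p ∪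
      (fun l => l.headI.sign :: l) '' nonzeroSeqs (S + 1) L (!p))
      ((fun l => -l.headI.sign :: l) '' {l ∈ nonzeroSeqs (S + 1) (L - 1) (!p) | 0 < L}) := by
    rw [Set.disjoint_left]
    rintro _ (⟨m, hm, rfl⟩ | ⟨m, hm, rfl⟩) ⟨m', ⟨hm', -⟩, h⟩
    · exact (grow_ne_sign_cons hm _ _).2 h.symm
    · obtain ⟨hhead, rfl⟩ := List.cons.inj h
      obtain ⟨a, t, rfl⟩ := List.exists_cons_of_ne_nil hm'.1
      have := Int.natAbs_sign_of_ne_zero (hm'.2.1 a List.mem_cons_self)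
      simp only [List.headI_cons] at hhead
      omega
  rw [nonzeroSeqs_add_two, Set.encard_union_eq disj_flip, Set.encard_union_eq disj_grow_same,
    grow_inj.encard_image, (cons_inj _ _).encard_image, (cons_inj _ _).encard_image]
  split_ifs with hL <;> simp [hL]

lemma mem_nonzeroSeqs_one_iff (l : List ℤ) (L : ℕ) (p : Bool) :
    l ∈ nonzeroSeqs 1 L p ↔ (l = [1] ∨ l = [-1]) ∧ L = 0 ∧ p = true := by
  constructor
  · rintro ⟨hne, hnz, hS, hL, hp⟩
    obtain ⟨a, t, rfl⟩ := List.exists_cons_of_ne_nil hne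
    simp only [List.mem_cons, forall_eq_or_imp] at hnz
    have ht : t.length ≤ absSum t := length_le_absSum hnz.2
    rw [absSum_cons] at hS
    obtain rfl : t = [] := List.eq_nil_of_length_eq_zero (by omega)
    have ha : a.natAbs = 1 := by simpa [absSum] using hS
    refine ⟨?_, by rw [← hL]; rfl, by simp [← hp]⟩
    simp only [List.cons.injEq, and_true]
    omega
  · rintro ⟨rfl | rfl, rfl, rfl⟩ <;> simp [nonzeroSeqs, absSum, signChanges]

lemma encard_nonzeroSeqs_one (L : ℕ) (p : Bool) :
    (nonzeroSeqs 1 L p).encard = if L = 0 ∧ p = true then 2 else 0 := by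
  split_ifs with h
  · rw [show nonzeroSeqs 1 L p = {[1], [-1]} by ext l; simp [mem_nonzeroSeqs_one_iff, h]]
    exact Set.encard_pair (by simp)
  · rw [Set.encard_eq_zero, Set.eq_empty_iff_forall_notMem]
    exact fun l hl => h ((mem_nonzeroSeqs_one_iff l L p).1 hl).2

def seqCount (S L : ℕ) (p : Bool) : ℕ :=
  if L < S then 2 ^ (S - L) * S.choose L else if L = S ∧ (L + 1).bodd = p then 2 else 0

lemma seqCount_succ (S L : ℕ) (p : Bool) :
    seqCount (S + 1) L p =
      seqCount S L p + seqCount S L (!p) + if 0 < L then seqCount S (L - 1) (!p) else 0 := by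
  rcases L with _ | L
  · rcases S with _ | S
    · cases p <;> rfl
    · simp [seqCount, pow_succ]; ring
  simp only [seqCount, Nat.add_sub_cancel, if_pos L.succ_pos, add_lt_add_iff_right]
  obtain hlt | rfl | rfl | hgt : L + 2 ≤ S ∨ S = L + 1 ∨ S = L ∨ S < L := by omega
  · obtain ⟨k, rfl⟩ := Nat.exists_eq_add_of_le hlt
    rw [if_pos (by omega), if_pos (by omega), if_pos (by omega), if_pos (by omega),
      show L + 2 + k - (L + 1) = k + 1 by omega, show L + 2 + k - L = k + 2 by omega,
      show L + 2 + k + 1 - (L + 1) = k + 2 by omega, Nat.choose_succ_succ' (L + 2 + k) L]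
    ring
  · cases p <;> cases h : L.bodd <;> simp [h] <;> ring
  · cases p <;> simp [Nat.bodd_succ]
  · split_ifs <;> omega

lemma encard_nonzeroSeqs (S L : ℕ) (p : Bool) :
    (nonzeroSeqs (S + 1) L p).encard = seqCount S L p := by
  induction S generalizing L p with
  | zero =>
    rw [encard_nonzeroSeqs_one]
    cases L <;> cases p <;> simp [seqCount]
  | succ S ih =>
    rw [encard_nonzeroSeqs_add_two, ih, ih, seqCount_succ]
    split_ifs <;> simp [ih]

lemma Eset_eq_nonzeroSeqs {c b : ℕ} (h : 2 * b ≤ c + 2) :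
    Eset c b = nonzeroSeqs (c + 1 - b) (c + 2 - 2 * b) false := by
  ext l
  simp only [Eset, IsECF, nonzeroSeqs, Set.mem_ofPred_eq, Nat.bodd_eq_false_iff_even]
  constructor
  · rintro ⟨⟨hne, heven, hnz⟩, hc, hb⟩
    exact ⟨hne, hnz, by omega, by omega, heven⟩
  · rintro ⟨hne, hnz, hS, hL, heven⟩
    exact ⟨⟨hne, heven, hnz⟩, by omega, by omega⟩

lemma Eset_eq_empty {c b : ℕ} (h : c + 2 < 2 * b) : Eset c b = ∅ := by
  ext l
  simp only [Eset, Set.mem_ofPred_eq, Set.mem_empty_iff_false, iff_false]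
  omega

lemma nonzeroSeqs_eq_empty {S L : ℕ} (h : S ≤ L) (p : Bool) : nonzeroSeqs S L p = ∅ := by
  ext l
  simp only [nonzeroSeqs, Set.mem_ofPred_eq, Set.mem_empty_iff_false, iff_false]
  rintro ⟨hne, hnz, rfl, rfl, -⟩
  exact absurd h (not_le.2 (signChanges_lt_absSum hne hnz))

theorem e_closed_formula (c b : ℕ) :
    e c b =
      if 3 ≤ c ∧ Odd c ∧ b = 2 then 2
      else if 3 ≤ c ∧ 3 ≤ b ∧ b ≤ (c + 2) / 2 then
        2 ^ (b - 2) * Nat.choose (c - b) (b - 2)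
      else 0 := by
  rcases lt_or_ge (c + 2) (2 * b) with h2b | h2b
  · rw [e, Eset_eq_empty h2b, Set.ncard_empty]
    split_ifs <;> omega
  rw [e, Eset_eq_nonzeroSeqs h2b]
  rcases lt_or_ge b 2 with hb | hb
  · rw [nonzeroSeqs_eq_empty (by omega), Set.ncard_empty]
    split_ifs <;> omega
  rw [show c + 1 - b = c - b + 1 by omega, Set.ncard_def, encard_nonzeroSeqs, ENat.toNat_natCast,
    seqCount]
  rcases hb.eq_or_lt with rfl | hb
  · have key : (c + 2 - 2 * 2 = c - 2 ∧ (c + 2 - 2 * 2 + 1).bodd = false) ↔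
        (3 ≤ c ∧ Odd c ∧ 2 = 2) := by
      rw [Nat.bodd_eq_false_iff_even, Nat.even_iff, Nat.odd_iff]
      omega
    rw [if_neg (by omega), if_congr key rfl rfl]
    split_ifs <;> omega
  · rw [if_pos (by omega), if_neg (by omega), if_pos (by omega),
      show c - b - (c + 2 - 2 * b) = b - 2 by omega,
      Nat.choose_symm_of_eq_add (show c - b = (c + 2 - 2 * b) + (b - 2) by omega)]
end

section
/- For each c ≥ 3, the total number of even-length sequences of nonzero integers with 2·Σ|a_i| − ℓ = c equals e(c) = (2/3)·(2^{c−2} − (−1)^{c−2}). -/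
open Classical

/-!
Split a sequence by its first entry `a`. If `|a| ≥ 2`, moving `a` one step towards `0` lowers
the crossing number by `2`, and this is a bijection onto all sequences of crossing number
`c - 2`. If `a = ±1`, what is left is a tail whose contribution to the crossing number depends
only on the sign of the entry before it. Counting these tails by their contribution `k` and
the parity of their length, with the same split, gives `2 ^ (k - 2)` tails of either parity
for `k ≥ 2`. Hence `e(c + 2) = e(c) + 2 ^ (c - 1)`, the recursion satisfied by `2 J(c - 2)`,
where `J(n) = (2 ^ n - (-1) ^ n) / 3` are the Jacobsthal numbers.
-/

namespace Int

lemma natAbs_add_sign_s2 {a : ℤ} (ha : a ≠ 0) : (a + a.sign).natAbs = a.natAbs + 1 := by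
  rcases ha.lt_or_gt with h | h
  · rw [sign_eq_neg_one_of_neg h]; omega
  · rw [sign_eq_one_of_pos h]; omega

lemma natAbs_add_sign_ne_one (a : ℤ) : (a + a.sign).natAbs ≠ 1 := by
  rcases lt_trichotomy a 0 with h | rfl | h
  · rw [sign_eq_neg_one_of_neg h]; omega
  · simp
  · rw [sign_eq_one_of_pos h]; omega

lemma add_sign_injective : Function.Injective fun a : ℤ => a + a.sign := by
  intro a b h
  rcases lt_trichotomy a 0 with ha | rfl | ha <;> rcases lt_trichotomy b 0 with hb | rfl | hb <;>
    simp only [sign_eq_neg_one_of_neg, sign_eq_one_of_pos, sign_zero, *] at h <;> omega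

lemma add_sign_mul_self_pos {a : ℤ} (ha : a ≠ 0) : 0 < (a + a.sign) * a := by
  rcases ha.lt_or_gt with h | h
  · rw [sign_eq_neg_one_of_neg h]; nlinarith
  · rw [sign_eq_one_of_pos h]; nlinarith

lemma exists_add_sign_eq_s2 {a : ℤ} (ha : 2 ≤ a.natAbs) : ∃ b ≠ 0, b + b.sign = a := by
  rcases le_or_gt a 0 with h | h
  · exact ⟨a + 1, by omega, by rw [sign_eq_neg_one_of_neg (by omega)]; ring⟩
  · exact ⟨a - 1, by omega, by rw [sign_eq_one_of_pos (by omega)]; ring⟩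

end Int

lemma mul_neg_iff_of_mul_pos {s s' a : ℤ} (h : 0 < s * s') : s * a < 0 ↔ s' * a < 0 := by
  rcases mul_pos_iff.1 h with ⟨hs, hs'⟩ | ⟨hs, hs'⟩ <;>
    simp [mul_neg_iff, hs, hs', hs.not_gt, hs'.not_gt]

lemma ZMod.natCast_add_one_eq_iff (n : ℕ) (p : ZMod 2) :
    ((n + 1 : ℕ) : ZMod 2) = p ↔ (n : ZMod 2) = p + 1 := by
  rw [Nat.cast_succ, ← CharTwo.sub_eq_add, sub_eq_iff_eq_add]

def tailCross (s : ℤ) (t : List ℤ) : ℤ := 2 * absSum t - signChanges (s :: t)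

@[simp]
lemma tailCross_nil (s : ℤ) : tailCross s [] = 0 := rfl

lemma tailCross_cons (s a : ℤ) (t : List ℤ) :
    tailCross s (a :: t) = 2 * a.natAbs - (if s * a < 0 then 1 else 0) + tailCross a t := by
  simp only [tailCross, absSum, List.map_cons, List.sum_cons, signChanges_cons_cons]
  push_cast
  split <;> ring

lemma tailCross_zero (l : List ℤ) : tailCross 0 l = 2 * absSum l - signChanges l := by
  cases l with
  | nil => rfl
  | cons a t => simp [tailCross, signChanges_cons_cons]

lemma tailCross_congr {s s' : ℤ} (h : 0 < s * s') (t : List ℤ) :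
    tailCross s t = tailCross s' t := by
  cases t with
  | nil => rfl
  | cons a t => simp only [tailCross_cons, mul_neg_iff_of_mul_pos h]

lemma tailCross_map_neg (s : ℤ) (t : List ℤ) :
    tailCross (-s) (t.map Neg.neg) = tailCross s t := by
  induction t generalizing s with
  | nil => rfl
  | cons a t ih => simp [tailCross_cons, ih]

lemma length_le_tailCross {t : List ℤ} (ht : ∀ x ∈ t, x ≠ 0) (s : ℤ) :
    (t.length : ℤ) ≤ tailCross s t := by
  induction t generalizing s with
  | nil => simp
  | cons a t ih =>
    have ha : (1 : ℤ) ≤ a.natAbs := by exact_mod_cast Int.natAbs_pos.2 (ht a List.mem_cons_self)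
    have := ih (fun x hx => ht x (List.mem_cons_of_mem a hx)) a
    rw [tailCross_cons, List.length_cons, Nat.cast_succ]
    split <;> omega

lemma tailCross_add_sign_cons {a : ℤ} (ha : a ≠ 0) (s : ℤ) (t : List ℤ) :
    tailCross s ((a + a.sign) :: t) = tailCross s (a :: t) + 2 := by
  have h := Int.add_sign_mul_self_pos ha
  rw [tailCross_cons, tailCross_cons, Int.natAbs_add_sign_s2 ha, tailCross_congr h t]
  simp only [mul_comm s, mul_neg_iff_of_mul_pos h]
  push_cast
  ring

def tailSet (s : ℤ) (k : ℕ) (p : ZMod 2) : Set (List ℤ) :=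
  {t | (t.length : ZMod 2) = p ∧ (∀ x ∈ t, x ≠ 0) ∧ tailCross s t = k}

lemma Ecross_eq_tailSet_diff (c : ℕ) : Ecross c = tailSet 0 c 0 \ {[]} := by
  ext l
  simp only [Ecross, IsECF, tailSet, tailCross_zero, ZMod.natCast_eq_zero_iff_even,
    Set.mem_sdiff, Set.mem_ofPred_eq, Set.mem_singleton_iff]
  tauto

lemma tailSet_neg (s : ℤ) (k : ℕ) (p : ZMod 2) :
    tailSet (-s) k p = List.map Neg.neg '' tailSet s k p := by
  rw [(List.map_involutive_iff.2 neg_involutive).image_eq_preimage_symm]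
  ext t
  simp only [tailSet, Set.mem_preimage, Set.mem_ofPred_eq, List.length_map, List.forall_mem_map,
    neg_ne_zero, ← tailCross_map_neg s, List.map_map, neg_comp_neg, List.map_id]

lemma encard_tailSet_neg (s : ℤ) (k : ℕ) (p : ZMod 2) :
    (tailSet (-s) k p).encard = (tailSet s k p).encard := by
  rw [tailSet_neg, (List.map_injective_iff.2 neg_injective).encard_image]

lemma length_le_of_mem_tailSet {s : ℤ} {k : ℕ} {p : ZMod 2} {t : List ℤ}
    (ht : t ∈ tailSet s k p) : t.length ≤ k := by
  have := length_le_tailCross ht.2.1 s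
  rw [ht.2.2] at this
  exact_mod_cast this

lemma nil_notMem_tailSet {s : ℤ} {k : ℕ} (hk : k ≠ 0) (p : ZMod 2) : [] ∉ tailSet s k p := by
  rintro ⟨-, -, h⟩
  simp only [tailCross_nil] at h
  omega

def incrHead : List ℤ → List ℤ
  | [] => []
  | a :: t => (a + a.sign) :: t

lemma incrHead_injective : Function.Injective incrHead := by
  rintro (_ | ⟨a, t⟩) (_ | ⟨b, u⟩) h <;> simp_all [incrHead, Int.add_sign_injective.eq_iff]

lemma incrHead_ne_cons {a : ℤ} (ha : a.natAbs = 1) (x r : List ℤ) : incrHead x ≠ a :: r := by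
  rcases x with _ | ⟨b, u⟩
  · simp [incrHead]
  · intro h
    simp only [incrHead, List.cons.injEq] at h
    exact Int.natAbs_add_sign_ne_one b (h.1 ▸ ha)

section HeadCases

variable {s : ℤ} {r : List ℤ} {k : ℕ} {p : ZMod 2}

lemma cons_mem_tailSet_add_two_of_natAbs_eq_one {a : ℤ} (ha : a.natAbs = 1) :
    a :: r ∈ tailSet s (k + 2) p ↔ r ∈ tailSet a (k + if s * a < 0 then 1 else 0) (p + 1) := by
  have ha₀ : a ≠ 0 := by rintro rfl; simp at ha
  simp only [tailSet, Set.mem_ofPred_eq, List.length_cons, ZMod.natCast_add_one_eq_iff,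
    List.forall_mem_cons, tailCross_cons, ha, ha₀, ne_eq, not_false_eq_true, true_and]
  refine and_congr_right fun _ => and_congr_right fun _ => ?_
  push_cast
  split_ifs <;> omega

lemma add_sign_cons_mem_tailSet_add_two {a : ℤ} (ha : a ≠ 0) :
    (a + a.sign) :: r ∈ tailSet s (k + 2) p ↔ a :: r ∈ tailSet s k p := by
  have ha' : a + a.sign ≠ 0 := by
    have := Int.natAbs_add_sign_s2 ha
    omega
  simp only [tailSet, Set.mem_ofPred_eq, List.length_cons, List.forall_mem_cons,
    tailCross_add_sign_cons ha, ha, ha', ne_eq, not_false_eq_true, true_and]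
  refine and_congr_right fun _ => and_congr_right fun _ => ?_
  push_cast
  omega

end HeadCases

theorem tailSet_add_two (s : ℤ) (k : ℕ) (p : ZMod 2) :
    tailSet s (k + 2) p =
      (1 :: ·) '' tailSet 1 (k + if s < 0 then 1 else 0) (p + 1) ∪
      (-1 :: ·) '' tailSet (-1) (k + if 0 < s then 1 else 0) (p + 1) ∪
      incrHead '' (tailSet s k p \ {[]}) := by
  have one {r} :
      1 :: r ∈ tailSet s (k + 2) p ↔ r ∈ tailSet 1 (k + if s < 0 then 1 else 0) (p + 1) :=
    by simpa using cons_mem_tailSet_add_two_of_natAbs_eq_one (r := r) (a := 1) rfl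
  have neg_one {r} :
      -1 :: r ∈ tailSet s (k + 2) p ↔ r ∈ tailSet (-1) (k + if 0 < s then 1 else 0) (p + 1) := by
    simpa using cons_mem_tailSet_add_two_of_natAbs_eq_one (r := r) (a := -1) rfl
  refine subset_antisymm ?_ (Set.union_subset (Set.union_subset ?_ ?_) ?_)
  · rintro (_ | ⟨a, r⟩) ht
    · exact absurd ht (nil_notMem_tailSet (by omega) p)
    have ha : a ≠ 0 := ht.2.1 a List.mem_cons_self
    rcases (by omega : a = 1 ∨ a = -1 ∨ 2 ≤ a.natAbs) with rfl | rfl | h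
    · exact .inl (.inl ⟨r, one.1 ht, rfl⟩)
    · exact .inl (.inr ⟨r, neg_one.1 ht, rfl⟩)
    · obtain ⟨b, hb, rfl⟩ := Int.exists_add_sign_eq_s2 h
      exact .inr ⟨b :: r, ⟨(add_sign_cons_mem_tailSet_add_two hb).1 ht, by simp⟩, rfl⟩
  · rintro _ ⟨r, hr, rfl⟩
    exact one.2 hr
  · rintro _ ⟨r, hr, rfl⟩
    exact neg_one.2 hr
  · rintro _ ⟨_ | ⟨b, r⟩, ⟨hr, hne⟩, rfl⟩
    · simp at hne
    · exact (add_sign_cons_mem_tailSet_add_two (hr.2.1 b List.mem_cons_self)).2 hr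

lemma disjoint_image_cons {a b : ℤ} (hab : a ≠ b) (A B : Set (List ℤ)) :
    Disjoint ((a :: ·) '' A) ((b :: ·) '' B) :=
  Set.disjoint_left.2 fun _ ⟨_, _, hr⟩ ⟨_, _, hr'⟩ => hab (List.head_eq_of_cons_eq (hr.trans hr'.symm))

lemma disjoint_image_cons_image_incrHead {a : ℤ} (ha : a.natAbs = 1) (A B : Set (List ℤ)) :
    Disjoint ((a :: ·) '' A) (incrHead '' B) :=
  Set.disjoint_left.2 fun _ ⟨r, _, hr⟩ ⟨x, _, hx⟩ => incrHead_ne_cons ha x r (hx.trans hr.symm)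

theorem encard_tailSet_add_two (s : ℤ) (k : ℕ) (p : ZMod 2) :
    (tailSet s (k + 2) p).encard =
      (tailSet 1 (k + if s < 0 then 1 else 0) (p + 1)).encard +
      (tailSet 1 (k + if 0 < s then 1 else 0) (p + 1)).encard +
      (tailSet s k p \ {[]}).encard := by
  rw [tailSet_add_two, Set.encard_union_eq, Set.encard_union_eq,
    List.cons_injective.encard_image, List.cons_injective.encard_image,
    incrHead_injective.encard_image, encard_tailSet_neg]
  · exact disjoint_image_cons (by norm_num) _ _
  · exact Set.disjoint_union_left.2 ⟨disjoint_image_cons_image_incrHead rfl _ _,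
      disjoint_image_cons_image_incrHead rfl _ _⟩

lemma tailSet_zero_zero (s : ℤ) : tailSet s 0 0 = {[]} := by
  refine Set.Subset.antisymm (fun t ht => ?_) (by simp [tailSet])
  exact List.eq_nil_of_length_eq_zero (Nat.le_zero.1 (length_le_of_mem_tailSet ht))

lemma tailSet_zero_one (s : ℤ) : tailSet s 0 1 = ∅ := by
  refine Set.eq_empty_of_forall_notMem fun t ht => ?_
  have := ht.1
  rw [Nat.le_zero.1 (length_le_of_mem_tailSet ht)] at this
  simp at this

lemma tailSet_one_zero (s : ℤ) : tailSet s 1 0 = ∅ := by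
  refine Set.eq_empty_of_forall_notMem fun t ht => ?_
  rcases t with _ | ⟨a, _ | ⟨b, r⟩⟩
  · exact nil_notMem_tailSet one_ne_zero 0 ht
  · simpa using ht.1
  · simpa using length_le_of_mem_tailSet ht

lemma tailSet_one_one_one : tailSet 1 1 1 = {[-1]} := by
  refine Set.Subset.antisymm (fun t ht => ?_) ?_
  · rcases t with _ | ⟨a, _ | ⟨b, r⟩⟩
    · exact absurd ht (nil_notMem_tailSet one_ne_zero 1)
    · have h := ht.2.2
      simp only [tailCross_cons, one_mul, tailCross_nil, add_zero] at h
      simp only [Set.mem_singleton_iff, List.cons.injEq, and_true]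
      split at h <;> omega
    · simpa using length_le_of_mem_tailSet ht
  · simp [tailSet, tailCross_cons]

lemma encard_tailSet_one_two (p : ZMod 2) : (tailSet 1 2 p).encard = 1 := by
  rw [encard_tailSet_add_two]
  simp only [Int.reduceLT, if_false, if_true]
  obtain rfl | rfl : p = 0 ∨ p = 1 := by revert p; decide
  · simp [tailSet_zero_one, tailSet_one_one_one, tailSet_zero_zero]
  · rw [show (1 : ZMod 2) + 1 = 0 from rfl]
    simp [tailSet_zero_zero, tailSet_one_zero, tailSet_zero_one]

theorem encard_tailSet_one_add_two (k : ℕ) (p : ZMod 2) :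
    (tailSet 1 (k + 2) p).encard = 2 ^ k := by
  induction k using Nat.twoStepInduction generalizing p with
  | zero => rw [encard_tailSet_one_two, pow_zero]
  | one =>
    rw [encard_tailSet_add_two]
    simp only [Int.reduceLT, if_false, if_true, Nat.reduceAdd, encard_tailSet_one_two]
    obtain rfl | rfl : p = 0 ∨ p = 1 := by revert p; decide
    · simp [tailSet_one_one_one, tailSet_one_zero, one_add_one_eq_two]
    · rw [show (1 : ZMod 2) + 1 = 0 from rfl]
      simp [tailSet_one_one_one, tailSet_one_zero, one_add_one_eq_two]
  | more k ih₀ ih₁ =>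
    rw [encard_tailSet_add_two, Set.sdiff_singleton_eq_self (nil_notMem_tailSet (by omega) p)]
    simp only [Int.reduceLT, if_false, if_true, add_zero, ih₀, ih₁]
    ring

def jacobsthal : ℕ → ℕ
  | 0 => 0
  | 1 => 1
  | n + 2 => jacobsthal (n + 1) + 2 * jacobsthal n

lemma jacobsthal_add_one_add_jacobsthal (n : ℕ) : jacobsthal (n + 1) + jacobsthal n = 2 ^ n := by
  induction n with
  | zero => rfl
  | succ n ih => rw [jacobsthal, pow_succ, ← ih]; ring

lemma jacobsthal_add_two_eq (n : ℕ) : jacobsthal (n + 2) = jacobsthal n + 2 ^ n := by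
  rw [jacobsthal, ← jacobsthal_add_one_add_jacobsthal]; ring

lemma three_mul_jacobsthal (n : ℕ) : 3 * (jacobsthal n : ℤ) = 2 ^ n - (-1) ^ n := by
  induction n with
  | zero => rfl
  | succ n ih =>
    have h : (jacobsthal (n + 1) : ℤ) + jacobsthal n = 2 ^ n := by
      exact_mod_cast jacobsthal_add_one_add_jacobsthal n
    rw [pow_succ, pow_succ]
    linear_combination 3 * h - ih

lemma encard_Ecross_add_two (c : ℕ) :
    (Ecross (c + 2)).encard = 2 * (tailSet 1 c 1).encard + (Ecross c).encard := by
  rw [Ecross_eq_tailSet_diff, Ecross_eq_tailSet_diff,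
    Set.sdiff_singleton_eq_self (nil_notMem_tailSet (by omega) 0), encard_tailSet_add_two]
  simp only [lt_irrefl, if_false, add_zero, zero_add]
  ring

theorem encard_Ecross (k : ℕ) : (Ecross (k + 2)).encard = 2 * jacobsthal k := by
  induction k using Nat.twoStepInduction with
  | zero =>
    rw [encard_Ecross_add_two, Ecross_eq_tailSet_diff, tailSet_zero_zero, tailSet_zero_one]
    simp [jacobsthal]
  | one =>
    rw [encard_Ecross_add_two, Ecross_eq_tailSet_diff, tailSet_one_zero, tailSet_one_one_one]
    simp [jacobsthal]
  | more k ih₀ _ =>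
    rw [encard_Ecross_add_two, encard_tailSet_one_add_two, ih₀, jacobsthal_add_two_eq]
    push_cast
    ring

theorem eTot_closed_formula (c : ℕ) (hc : 3 ≤ c) :
    (3 : ℤ) * eTot c = 2 * (2 ^ (c - 2) - (-1 : ℤ) ^ (c - 2)) := by
  obtain ⟨k, rfl⟩ : ∃ k, c = k + 2 := ⟨c - 2, by omega⟩
  rw [eTot, Set.ncard_def, encard_Ecross, Nat.add_sub_cancel, ← three_mul_jacobsthal]
  norm_cast
  rw [ENat.toNat_natCast]
  ring
end
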